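/- arXiv:2106.08619 — 4 statements merged into one kernel-verified Lean document; each statement's English description precedes it below -/
import Mathlib

section
/- Let d, s, H be positive integers, P ⊆ {1,...,d} a set of patch indices, and σ : ℝ → ℝ differentiable. Consider the one-hidden-layer convolutional network f^CNN(x;θ) = (1/√H) Σ_{h=1}^H a_h (1/|P|) Σ_{i∈P} σ(w_h·x_i + b_h), with parameters θ consisting of all a_h ∈ ℝ, w_h ∈ ℝ^s, b_h ∈ ℝ. Then its finite-width neural tangent kernel Θ^CN_N(x,y;θ) = Σ_n ∂_{θ_n} f^CNN(x;θ) ∂_{θ_n} f^CNN(y;θ) satisfies Θ^CN_N(x,y;θ) = (1/|P|²) Σ_{i,j∈P} Θ^FC_N(x_i, y_j; θ), where Θ^FC_N(u,v;θ) = (1/H) Σ_{h=1}^H [ σ(w_h·u + b_h) σ(w_h·v + b_h) + a_h² σ'(w_h·u + b_h) σ'(w_h·v + b_h) (u·v + 1) ] is the finite-width NTK of the one-hidden-layer fully-connected network (1/√H) Σ_h a_h σ(w_h·u + b_h) acting on s-dimensional inputs. -/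
/-
With shared parameters, the convolutional network is the patch average of the fully-connected
one: `f^CNN(x) = (1/|P|) Σ_{i∈P} f^FC(x_i)`. Its gradient in the parameters is therefore the patch
average of the gradients of `f^FC`, and since the NTK is the Euclidean inner product of two
gradients, bilinearity turns it into the double patch average of `∇f^FC(x_i) · ∇f^FC(y_j)`.
The latter is `Θ^FC(x_i, y_j)`: the gradient of `f^FC` at `u` has components
`σ(z_h)/√H`, `a_h σ'(z_h) u_l/√H` and `a_h σ'(z_h)/√H`, where `z_h = w_h·u + b_h`.
-/

noncomputable section

/-- The cyclic `s`-dimensional patch of `x ∈ ℝ^d` starting at the (0-based) index `i`. -/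
def patch (d s : ℕ) (i : ℕ) (x : Fin d → ℝ) : Fin s → ℝ :=
  fun j => if h : 0 < d then x ⟨(i + j.val) % d, Nat.mod_lt _ h⟩ else 0

/-- One-hidden-layer convolutional network with average pooling:
`f^CNN(x) = (1/√H) Σ_h a_h (1/|P|) Σ_{i∈P} σ(w_h·x_i + b_h)`. -/
def fCNN (d s H : ℕ) (P : Finset (Fin d)) (σ : ℝ → ℝ)
    (a : Fin H → ℝ) (w : Fin H → Fin s → ℝ) (b : Fin H → ℝ) (x : Fin d → ℝ) : ℝ :=
  (1 / Real.sqrt H) * ∑ h : Fin H, a h *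
    ((1 / (P.card : ℝ)) * ∑ i ∈ P, σ (∑ l, w h l * patch d s i.val x l + b h))

/-- Finite-width NTK of a one-hidden-layer fully-connected network on `s`-dimensional
inputs:
`Θ^FC_N(u,v) = (1/H) Σ_h [σ(w_h·u+b_h)σ(w_h·v+b_h) + a_h² σ'(w_h·u+b_h)σ'(w_h·v+b_h)(u·v+1)]`. -/
def thetaFC (s H : ℕ) (σ : ℝ → ℝ)
    (a : Fin H → ℝ) (w : Fin H → Fin s → ℝ) (b : Fin H → ℝ) (u v : Fin s → ℝ) : ℝ :=
  (1 / (H : ℝ)) * ∑ h : Fin H,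
    (σ (∑ l, w h l * u l + b h) * σ (∑ l, w h l * v l + b h) +
      (a h) ^ 2 * deriv σ (∑ l, w h l * u l + b h) * deriv σ (∑ l, w h l * v l + b h) *
        (∑ l, u l * v l + 1))

open Finset Function

theorem hasDerivAt_sum_apply_update {ι β : Type*} [Fintype ι] [DecidableEq ι]
    (F : ι → β → ℝ) (θ : ι → β) (k : ι) {γ : ℝ → β} {F' t : ℝ}
    (hF : HasDerivAt (fun c => F k (γ c)) F' t) :
    HasDerivAt (fun c => ∑ j, F j (update θ k (γ c) j)) F' t := by
  simp_rw [apply_update F θ k, sum_update_of_mem (mem_univ k)]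
  exact hF.add_const _

theorem hasDerivAt_sum_update_mul {ι : Type*} [Fintype ι] [DecidableEq ι] (v u : ι → ℝ) (l : ι)
    (t : ℝ) :
    HasDerivAt (fun c => ∑ k, update v l c k * u k) (u l) t :=
  hasDerivAt_sum_apply_update (fun k r => r * u k) v l
    (by simpa using (hasDerivAt_id t).mul_const (u l))

def fFC (s H : ℕ) (σ : ℝ → ℝ) (a : Fin H → ℝ) (w : Fin H → Fin s → ℝ) (b : Fin H → ℝ)
    (u : Fin s → ℝ) : ℝ :=
  (1 / Real.sqrt H) * ∑ h : Fin H, a h * σ (∑ l, w h l * u l + b h)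

theorem fCNN_eq_average_fFC (d s H : ℕ) (P : Finset (Fin d)) (σ : ℝ → ℝ)
    (a : Fin H → ℝ) (w : Fin H → Fin s → ℝ) (b : Fin H → ℝ) (x : Fin d → ℝ) :
    fCNN d s H P σ a w b x = (1 / (P.card : ℝ)) * ∑ i ∈ P, fFC s H σ a w b (patch d s i x) := by
  simp only [fCNN, fFC, mul_sum]
  rw [sum_comm]
  exact sum_congr rfl fun h _ => sum_congr rfl fun i _ => by ring

abbrev ParamIdx (H s : ℕ) := Fin H ⊕ (Fin H × Fin s) ⊕ Fin H

section Gradient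

variable {H s : ℕ}

def paramCoord (a : Fin H → ℝ) (w : Fin H → Fin s → ℝ) (b : Fin H → ℝ) : ParamIdx H s → ℝ
  | .inl h => a h
  | .inr (.inl (h, l)) => w h l
  | .inr (.inr h) => b h

def paramLine (F : (Fin H → ℝ) → (Fin H → Fin s → ℝ) → (Fin H → ℝ) → ℝ)
    (a : Fin H → ℝ) (w : Fin H → Fin s → ℝ) (b : Fin H → ℝ) : ParamIdx H s → ℝ → ℝ
  | .inl h => fun c => F (update a h c) w b
  | .inr (.inl (h, l)) => fun c => F a (update w h (update (w h) l c)) b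
  | .inr (.inr h) => fun c => F a w (update b h c)

def paramGrad (F : (Fin H → ℝ) → (Fin H → Fin s → ℝ) → (Fin H → ℝ) → ℝ)
    (a : Fin H → ℝ) (w : Fin H → Fin s → ℝ) (b : Fin H → ℝ) (p : ParamIdx H s) : ℝ :=
  deriv (paramLine F a w b p) (paramCoord a w b p)

def HasParamGrad (F : (Fin H → ℝ) → (Fin H → Fin s → ℝ) → (Fin H → ℝ) → ℝ)
    (g : ParamIdx H s → ℝ) (a : Fin H → ℝ) (w : Fin H → Fin s → ℝ) (b : Fin H → ℝ) : Prop :=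
  ∀ p, HasDerivAt (paramLine F a w b p) (g p) (paramCoord a w b p)

theorem paramGrad_dotProduct (F G : (Fin H → ℝ) → (Fin H → Fin s → ℝ) → (Fin H → ℝ) → ℝ)
    (a : Fin H → ℝ) (w : Fin H → Fin s → ℝ) (b : Fin H → ℝ) :
    paramGrad F a w b ⬝ᵥ paramGrad G a w b =
      ∑ h : Fin H,
        (deriv (fun c => F (update a h c) w b) (a h) *
            deriv (fun c => G (update a h c) w b) (a h) +
          ∑ l : Fin s,
            deriv (fun c => F a (update w h (update (w h) l c)) b) (w h l) *
              deriv (fun c => G a (update w h (update (w h) l c)) b) (w h l) +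
          deriv (fun c => F a w (update b h c)) (b h) *
            deriv (fun c => G a w (update b h c)) (b h)) := by
  simp only [dotProduct, Fintype.sum_sum_type, Fintype.sum_prod_type, sum_add_distrib]
  exact (add_assoc _ _ _).symm

variable {a : Fin H → ℝ} {w : Fin H → Fin s → ℝ} {b : Fin H → ℝ}

theorem HasParamGrad.paramGrad_eq {F : (Fin H → ℝ) → (Fin H → Fin s → ℝ) → (Fin H → ℝ) → ℝ}
    {g : ParamIdx H s → ℝ} (hF : HasParamGrad F g a w b) : paramGrad F a w b = g :=
  funext fun p => (hF p).deriv

theorem HasParamGrad.const_mul_sum {ι : Type*} {S : Finset ι}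
    {F : ι → (Fin H → ℝ) → (Fin H → Fin s → ℝ) → (Fin H → ℝ) → ℝ} {g : ι → ParamIdx H s → ℝ}
    (hF : ∀ i ∈ S, HasParamGrad (F i) (g i) a w b) (c : ℝ) :
    HasParamGrad (fun a w b => c * ∑ i ∈ S, F i a w b) (c • ∑ i ∈ S, g i) a w b := by
  intro p
  have hline : paramLine (fun a w b => c * ∑ i ∈ S, F i a w b) a w b p =
      fun t => c * ∑ i ∈ S, paramLine (F i) a w b p t := by
    rcases p with h | ⟨h, l⟩ | h <;> rfl
  rw [hline]
  simpa using (HasDerivAt.fun_sum fun i hi => hF i hi p).const_mul c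

end Gradient

section FullyConnected

variable {s H : ℕ} (σ : ℝ → ℝ) (a : Fin H → ℝ) (w : Fin H → Fin s → ℝ) (b : Fin H → ℝ)

def fcGrad (u : Fin s → ℝ) : ParamIdx H s → ℝ
  | .inl h => 1 / Real.sqrt H * σ (∑ l, w h l * u l + b h)
  | .inr (.inl (h, l)) => 1 / Real.sqrt H * (a h * (deriv σ (∑ l, w h l * u l + b h) * u l))
  | .inr (.inr h) => 1 / Real.sqrt H * (a h * deriv σ (∑ l, w h l * u l + b h))

variable {σ} in
theorem hasParamGrad_fFC (hσ : Differentiable ℝ σ) (u : Fin s → ℝ) :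
    HasParamGrad (fun a w b => fFC s H σ a w b u) (fcGrad σ a w b u) a w b := by
  rintro (h | ⟨h, l⟩ | h) <;> simp only [paramCoord] <;>
    refine HasDerivAt.const_mul (1 / Real.sqrt H) ?_
  · exact hasDerivAt_sum_apply_update (fun k r => r * σ (∑ l, w k l * u l + b k)) a h
      (by simpa using (hasDerivAt_id (a h)).mul_const (σ (∑ l, w h l * u l + b h)))
  · refine hasDerivAt_sum_apply_update (fun k v => a k * σ (∑ l, v l * u l + b k)) w h ?_
    have hz := (hasDerivAt_sum_update_mul (w h) u l (w h l)).add_const (b h)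
    have := ((hσ _).hasDerivAt.comp (w h l) hz).const_mul (a h)
    simpa [comp_def] using this
  · refine hasDerivAt_sum_apply_update (fun k r => a k * σ (∑ l, w k l * u l + r)) b h ?_
    have hz := (hasDerivAt_id (b h)).const_add (∑ l, w h l * u l)
    have := ((hσ _).hasDerivAt.comp (b h) hz).const_mul (a h)
    simpa [comp_def] using this

theorem fcGrad_dotProduct (u v : Fin s → ℝ) :
    fcGrad σ a w b u ⬝ᵥ fcGrad σ a w b v = thetaFC s H σ a w b u v := by
  have hH : 1 / Real.sqrt H * (1 / Real.sqrt H) = 1 / (H : ℝ) := by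
    rw [div_mul_div_comm, one_mul, Real.mul_self_sqrt (Nat.cast_nonneg H)]
  simp only [dotProduct, Fintype.sum_sum_type, Fintype.sum_prod_type, thetaFC, fcGrad, mul_sum,
    ← sum_add_distrib]
  refine sum_congr rfl fun h _ => ?_
  generalize 1 / Real.sqrt H = k at hH ⊢
  have hw : ∑ l, k * (a h * (deriv σ (∑ l, w h l * u l + b h) * u l)) *
        (k * (a h * (deriv σ (∑ l, w h l * v l + b h) * v l))) =
      k * k * (a h ^ 2 * deriv σ (∑ l, w h l * u l + b h) * deriv σ (∑ l, w h l * v l + b h)) *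
        ∑ l, u l * v l := by
    rw [mul_sum]
    exact sum_congr rfl fun l _ => by ring
  rw [hw, ← hH]
  ring

end FullyConnected

theorem smul_sum_dotProduct_smul_sum {α ι κ m : Type*} [CommSemiring α] [Fintype m]
    (S : Finset ι) (T : Finset κ) (c : α) (u : ι → m → α) (v : κ → m → α) :
    (c • ∑ i ∈ S, u i) ⬝ᵥ (c • ∑ j ∈ T, v j) = c ^ 2 * ∑ i ∈ S, ∑ j ∈ T, u i ⬝ᵥ v j := by
  simp only [smul_dotProduct, dotProduct_smul, sum_dotProduct, dotProduct_sum, smul_eq_mul]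
  rw [← mul_sum, sum_comm, ← mul_assoc, sq]

theorem hasParamGrad_fCNN {d s H : ℕ} (P : Finset (Fin d)) {σ : ℝ → ℝ} (hσ : Differentiable ℝ σ)
    (a : Fin H → ℝ) (w : Fin H → Fin s → ℝ) (b : Fin H → ℝ) (x : Fin d → ℝ) :
    HasParamGrad (fun a w b => fCNN d s H P σ a w b x)
      ((1 / (P.card : ℝ)) • ∑ i ∈ P, fcGrad σ a w b (patch d s i x)) a w b := by
  simp only [fCNN_eq_average_fFC]
  exact HasParamGrad.const_mul_sum (fun i _ => hasParamGrad_fFC a w b hσ _) _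

theorem statement_2_general
    (d s H : ℕ)
    (P : Finset (Fin d)) (σ : ℝ → ℝ) (hσ : Differentiable ℝ σ)
    (a : Fin H → ℝ) (w : Fin H → Fin s → ℝ) (b : Fin H → ℝ) (x y : Fin d → ℝ) :
    (∑ h : Fin H,
      (deriv (fun c => fCNN d s H P σ (Function.update a h c) w b x) (a h) *
         deriv (fun c => fCNN d s H P σ (Function.update a h c) w b y) (a h) +
       (∑ l : Fin s,
         deriv (fun c =>
             fCNN d s H P σ a (Function.update w h (Function.update (w h) l c)) b x)
           (w h l) *
         deriv (fun c =>
             fCNN d s H P σ a (Function.update w h (Function.update (w h) l c)) b y)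
           (w h l)) +
       deriv (fun c => fCNN d s H P σ a w (Function.update b h c) x) (b h) *
         deriv (fun c => fCNN d s H P σ a w (Function.update b h c) y) (b h)))
    = (1 / (P.card : ℝ) ^ 2) * ∑ i ∈ P, ∑ j ∈ P,
        thetaFC s H σ a w b (patch d s i.val x) (patch d s j.val y) := by
  refine (paramGrad_dotProduct (fun a w b => fCNN d s H P σ a w b x)
    (fun a w b => fCNN d s H P σ a w b y) a w b).symm.trans ?_
  rw [(hasParamGrad_fCNN P hσ a w b x).paramGrad_eq, (hasParamGrad_fCNN P hσ a w b y).paramGrad_eq,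
    smul_sum_dotProduct_smul_sum, one_div_pow]
  simp only [fcGrad_dotProduct]

/-- the finite-width NTK of a one-hidden-layer CNN equals the doubly
averaged fully-connected NTK over pairs of patches:
`Θ^CN_N(x,y;θ) = (1/|P|²) Σ_{i,j∈P} Θ^FC_N(x_i, y_j; θ)`. -/
theorem statement_2
    (d s H : ℕ) (hd : 0 < d) (hs : 0 < s) (hH : 0 < H)
    (P : Finset (Fin d)) (σ : ℝ → ℝ) (hσ : Differentiable ℝ σ)
    (a : Fin H → ℝ) (w : Fin H → Fin s → ℝ) (b : Fin H → ℝ) (x y : Fin d → ℝ) :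
    (∑ h : Fin H,
      (deriv (fun c => fCNN d s H P σ (Function.update a h c) w b x) (a h) *
         deriv (fun c => fCNN d s H P σ (Function.update a h c) w b y) (a h) +
       (∑ l : Fin s,
         deriv (fun c =>
             fCNN d s H P σ a (Function.update w h (Function.update (w h) l c)) b x)
           (w h l) *
         deriv (fun c =>
             fCNN d s H P σ a (Function.update w h (Function.update (w h) l c)) b y)
           (w h l)) +
       deriv (fun c => fCNN d s H P σ a w (Function.update b h c) x) (b h) *
         deriv (fun c => fCNN d s H P σ a w (Function.update b h c) y) (b h)))
    = (1 / (P.card : ℝ) ^ 2) * ∑ i ∈ P, ∑ j ∈ P,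
        thetaFC s H σ a w b (patch d s i.val x) (patch d s j.val y) :=
  statement_2_general d s H P σ hσ a w b x y
end
end

section
/- Let s, d be positive integers with d ≥ 2s. For k, q ∈ 2πℤ^s whose first and last components are both nonzero (i.e. k, q ∈ F^s), the following holds on the d-dimensional torus with the uniform measure: ∫_{[0,1]^d} (Σ_{i=1}^d e^{i k·x_i}) (Σ_{j=1}^d e^{-i q·x_j}) dx = d · δ_{k,q}, where x_i denotes the cyclic s-dimensional patch of x starting at position i and δ_{k,q} is 1 if k = q and 0 otherwise. -/
open MeasureTheory

noncomputable section

/-- The plane wave `e^{i k · z}` on `ℝ^s`, for the wavevector `k = 2πn`. -/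
def planeWave (s : ℕ) (n : Fin s → ℤ) (z : Fin s → ℝ) : ℂ :=
  Complex.exp (Complex.I * ((∑ j, 2 * Real.pi * (n j : ℝ) * z j : ℝ) : ℂ))

/-!
Each plane wave read on a patch is a character `x ↦ e^{2πi⟨m, x⟩}` of the `d`-torus, where `m` is
`n` placed cyclically at the position of the patch, and characters are orthonormal on `[0,1]^d`.
So the integral counts the pairs `(i, j)` for which `n` placed at `i` equals `n'` placed at `j`.
Since the first and last entries of `n` are nonzero and cannot wrap around onto each other
(`2s ≤ d + 1`), the placed vector determines its position, forcing `i = j` and `n = n'`.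
-/

open Complex Real in
lemma integral_Icc_exp_two_pi_int_mul (m : ℤ) :
    ∫ y in Set.Icc (0 : ℝ) 1, exp (I * ((2 * π * m * y : ℝ) : ℂ)) = if m = 0 then 1 else 0 := by
  rw [integral_Icc_eq_integral_Ioc, ← intervalIntegral.integral_of_le zero_le_one]
  split_ifs with hm
  · simp [hm]
  have hc : I * (2 * π * m) ≠ 0 := by simp [pi_ne_zero, hm]
  have h := integral_exp_mul_complex (a := 0) (b := 1) hc
  push_cast at h ⊢
  simp_rw [← mul_assoc] at h ⊢
  rw [h]
  have : I * 2 * π * m = m * (2 * π * I) := by ring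
  simp [this, exp_int_mul_two_pi_mul_I]

lemma planeWave_eq_prod (s : ℕ) (n : Fin s → ℤ) (z : Fin s → ℝ) :
    planeWave s n z = ∏ j, Complex.exp (Complex.I * ((2 * Real.pi * n j * z j : ℝ) : ℂ)) := by
  rw [planeWave, ← Complex.exp_sum, Complex.ofReal_sum, Finset.mul_sum]

lemma planeWave_add (s : ℕ) (n n' : Fin s → ℤ) (z : Fin s → ℝ) :
    planeWave s (n + n') z = planeWave s n z * planeWave s n' z := by
  simp only [planeWave_eq_prod, ← Finset.prod_mul_distrib, ← Complex.exp_add]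
  refine Finset.prod_congr rfl fun j _ => congrArg Complex.exp ?_
  push_cast [Pi.add_apply]
  ring

lemma continuous_planeWave (s : ℕ) (n : Fin s → ℤ) : Continuous (planeWave s n) := by
  unfold planeWave
  fun_prop

lemma integral_planeWave (s : ℕ) (n : Fin s → ℤ) :
    ∫ z in Set.Icc (0 : Fin s → ℝ) 1, planeWave s n z = if n = 0 then 1 else 0 := by
  simp_rw [planeWave_eq_prod, ← Set.pi_univ_Icc, volume_pi, Measure.restrict_pi_pi]
  rw [integral_fintype_prod_eq_prod
    (fun j y => Complex.exp (Complex.I * ((2 * Real.pi * n j * y : ℝ) : ℂ)))]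
  simp only [Pi.zero_apply, Pi.one_apply, integral_Icc_exp_two_pi_int_mul, Fintype.prod_boole]
  congr 1
  exact propext funext_iff.symm

lemma planeWave_sum {ι : Type*} (s : ℕ) (t : Finset ι) (n : ι → Fin s → ℤ) (z : Fin s → ℝ) :
    planeWave s (∑ a ∈ t, n a) z = ∏ a ∈ t, planeWave s (n a) z := by
  induction t using Finset.cons_induction with
  | empty => simp [planeWave]
  | cons a t ha ih => rw [Finset.sum_cons, Finset.prod_cons, planeWave_add, ih]

lemma planeWave_single (s : ℕ) (j : Fin s) (m : ℤ) (z : Fin s → ℝ) :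
    planeWave s (Pi.single j m) z = Complex.exp (Complex.I * ((2 * Real.pi * m * z j : ℝ) : ℂ)) := by
  rw [planeWave_eq_prod, Fintype.prod_eq_single j fun l hl => by simp [Pi.single_eq_of_ne hl],
    Pi.single_eq_same]

lemma Fin.ofNat_eq_ofNat_iff_modEq (d a b : ℕ) [NeZero d] :
    Fin.ofNat d a = Fin.ofNat d b ↔ a ≡ b [MOD d] := by
  simp [Fin.ext_iff, Nat.ModEq]

section PatchEmbed

variable (d : ℕ) [NeZero d] {s : ℕ}

lemma patch_eq_comp_ofNat (i : ℕ) (x : Fin d → ℝ) :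
    patch d s i x = fun l : Fin s => x (Fin.ofNat d (i + l)) := by
  funext l
  simp only [patch, dif_pos (Nat.pos_of_neZero d)]
  rfl

def patchEmbed (n : Fin s → ℤ) (i : ℕ) : Fin d → ℤ :=
  ∑ l : Fin s, Pi.single (Fin.ofNat d (i + l)) (n l)

lemma planeWave_patch (n : Fin s → ℤ) (i : ℕ) (x : Fin d → ℝ) :
    planeWave s n (patch d s i x) = planeWave d (patchEmbed d n i) x := by
  rw [patchEmbed, planeWave_sum, planeWave_eq_prod, patch_eq_comp_ofNat]
  simp only [planeWave_single]

lemma patchEmbed_neg (n : Fin s → ℤ) (i : ℕ) : patchEmbed d (-n) i = -patchEmbed d n i := by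
  simp [patchEmbed, Pi.single_neg, Finset.sum_neg_distrib]

lemma patchEmbed_apply_ofNat (hsd : s ≤ d) (n : Fin s → ℤ) (i : ℕ) (l : Fin s) :
    patchEmbed d n i (Fin.ofNat d (i + l)) = n l := by
  rw [patchEmbed, Finset.sum_apply, Fintype.sum_eq_single l, Pi.single_eq_same]
  intro l' hl'
  refine Pi.single_eq_of_ne (fun h => hl' (Fin.ext ?_)) _
  exact (((Fin.ofNat_eq_ofNat_iff_modEq d _ _).1 h).add_left_cancel'.eq_of_lt_of_lt
    (by omega) (by omega)).symm

lemma exists_ofNat_eq_of_patchEmbed_ne_zero {n : Fin s → ℤ} {i : ℕ} {c : Fin d}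
    (h : patchEmbed d n i c ≠ 0) : ∃ l : Fin s, Fin.ofNat d (i + l) = c := by
  by_contra! hc
  rw [patchEmbed, Finset.sum_apply] at h
  exact h (Finset.sum_eq_zero fun l _ => Pi.single_eq_of_ne' (hc l) _)

lemma patchEmbed_eq_patchEmbed_iff (hs : 0 < s) (hsd : 2 * s ≤ d + 1)
    {n n' : Fin s → ℤ} (hn0 : n ⟨0, hs⟩ ≠ 0) (hnl : n ⟨s - 1, Nat.sub_lt hs one_pos⟩ ≠ 0)
    (i j : Fin d) : patchEmbed d n i = patchEmbed d n' j ↔ i = j ∧ n = n' := by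
  refine ⟨fun H => ?_, by rintro ⟨rfl, rfl⟩; rfl⟩
  have hsd' : s ≤ d := by omega
  have first := patchEmbed_apply_ofNat d hsd' n i ⟨0, hs⟩
  have last := patchEmbed_apply_ofNat d hsd' n i ⟨s - 1, Nat.sub_lt hs one_pos⟩
  rw [H] at first last
  -- `n 0` and `n (s - 1)` lie in the patch at `j` and are `s - 1` apart, so they are its two ends.
  obtain ⟨l, hl⟩ := exists_ofNat_eq_of_patchEmbed_ne_zero d (by rwa [first])
  obtain ⟨l', hl'⟩ := exists_ofNat_eq_of_patchEmbed_ne_zero d (by rwa [last])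
  rw [Fin.ofNat_eq_ofNat_iff_modEq] at hl hl'
  have hll' : l + (s - 1) = l' := by
    have : j + (l + (s - 1)) ≡ j + l' [MOD d] := by
      rw [← add_assoc]
      exact (hl.add_right _).trans (by simpa using hl'.symm)
    exact this.add_left_cancel'.eq_of_lt_of_lt (by omega) (by omega)
  have hij : i = j := by
    have hl0 : (l : ℕ) = 0 := by omega
    simp only [hl0, add_zero] at hl
    exact Fin.ext (hl.symm.eq_of_lt_of_lt i.isLt j.isLt)
  subst hij
  refine ⟨rfl, funext fun l => ?_⟩
  rw [← patchEmbed_apply_ofNat d hsd' n i l, H, patchEmbed_apply_ofNat d hsd' n' i l]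

end PatchEmbed

theorem statement_10_general
    (s d : ℕ) (hs : 0 < s) (hd : 2 * s ≤ d)
    (n n' : Fin s → ℤ)
    (hn1 : n ⟨0, hs⟩ ≠ 0) (hns : n ⟨s - 1, Nat.sub_lt hs one_pos⟩ ≠ 0) :
    ∫ x in Set.Icc (0 : Fin d → ℝ) 1,
        (∑ i : Fin d, planeWave s n (patch d s i.val x)) *
          (∑ j : Fin d, planeWave s (fun l => -(n' l)) (patch d s j.val x))
      = if n = n' then (d : ℂ) else 0 := by
  have : NeZero d := ⟨by omega⟩
  have integrable (m : Fin d → ℤ) : IntegrableOn (planeWave d m) (Set.Icc 0 1) :=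
    (continuous_planeWave d m).integrableOn_Icc
  have cross_term (i j : Fin d) (x : Fin d → ℝ) :
      planeWave s n (patch d s i x) * planeWave s (-n') (patch d s j x) =
        planeWave d (patchEmbed d n i - patchEmbed d n' j) x := by
    rw [planeWave_patch, planeWave_patch, sub_eq_add_neg, planeWave_add, patchEmbed_neg]
  calc _ = ∑ i : Fin d, ∑ j : Fin d,
        ∫ x in Set.Icc 0 1, planeWave d (patchEmbed d n i - patchEmbed d n' j) x := by
        simp_rw [Finset.sum_mul_sum, ← Pi.neg_def, cross_term]
        rw [integral_finsetSum _ fun i _ => integrable_finsetSum _ fun j _ => integrable _]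
        exact Finset.sum_congr rfl fun i _ => integral_finsetSum _ fun j _ => integrable _
    _ = ∑ i : Fin d, ∑ j : Fin d, if i = j ∧ n = n' then 1 else 0 := by
        simp_rw [integral_planeWave, sub_eq_zero, patchEmbed_eq_patchEmbed_iff d hs (by omega) hn1 hns]
    _ = if n = n' then (d : ℂ) else 0 := by
        split_ifs with h <;> simp [h]

/-- key overlap computation on the `d`-torus. For wavevectors
`k = 2πn`, `q = 2πn'` in `F^s` (first and last components nonzero),
`∫ (Σ_i e^{ik·x_i})(Σ_j e^{-iq·x_j}) dx = d·δ_{k,q}`. -/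
theorem statement_10
    (s d : ℕ) (hs : 0 < s) (hd : 2 * s ≤ d)
    (n n' : Fin s → ℤ)
    (hn1 : n ⟨0, hs⟩ ≠ 0) (hns : n ⟨s - 1, Nat.sub_lt hs one_pos⟩ ≠ 0)
    (hn'1 : n' ⟨0, hs⟩ ≠ 0) (hn's : n' ⟨s - 1, Nat.sub_lt hs one_pos⟩ ≠ 0) :
    ∫ x in Set.Icc (0 : Fin d → ℝ) 1,
        (∑ i : Fin d, planeWave s n (patch d s i.val x)) *
          (∑ j : Fin d, planeWave s (fun l => -(n' l)) (patch d s j.val x))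
      = if n = n' then (d : ℂ) else 0 :=
  statement_10_general s d hs hd n n' hn1 hns
end
end

section
/- Let A > 0 and a > 1, and set λ_ρ = A ρ^{-a} for integers ρ ≥ 1. For every real P ≥ 1 there exists a unique ν(P) > 0 such that Σ_{ρ=1}^∞ λ_ρ/(λ_ρ + ν(P)) = P, and there exists a constant C > 0 such that lim_{P→∞} P^a ν(P) = C; explicitly, C = (A^{1/a} · π/(a sin(π/a)))^a. In particular ν(P) = Θ(P^{-a}) as P → ∞. -/
/-!
Write `v = A b^a`. Then `λ_ρ / (λ_ρ + v) = f (b ρ)` with `f u = (1 + u^a)⁻¹`, so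
`b · Σ_ρ λ_ρ / (λ_ρ + v)` is a right Riemann sum of the decreasing function `f` with step `b`,
and the integral test traps it between `I - b` and `I`, where `I = ∫₀^∞ f = π / (a sin (π/a))`
is a beta integral. At a solution of `Σ_ρ λ_ρ / (λ_ρ + ν) = P` this reads `I - b ≤ b P ≤ I`,
so `b → 0` and `b P → I`, i.e. `P^a ν = A (b P)^a → A I^a`. The same two bounds provide the
endpoints of an intermediate value argument for existence, and uniqueness holds because the sum
is strictly decreasing in `ν`.
-/

open Filter Real Set MeasureTheory Topology

theorem integral_rpow_mul_one_sub_rpow_neg {t : ℝ} (ht₀ : 0 < t) (ht₁ : t < 1) :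
    ∫ x in (0 : ℝ)..1, x ^ (t - 1) * (1 - x) ^ (-t) = π / sin (π * t) := by
  have hbeta : Complex.betaIntegral t ((1 - t : ℝ) : ℂ)
      = ((∫ x in (0 : ℝ)..1, x ^ (t - 1) * (1 - x) ^ (-t) : ℝ) : ℂ) := by
    rw [Complex.betaIntegral, ← intervalIntegral.integral_ofReal]
    refine intervalIntegral.integral_congr fun x hx => ?_
    rw [uIcc_of_le zero_le_one] at hx
    rw [← Complex.ofReal_one, ← Complex.ofReal_sub, ← Complex.ofReal_sub, ← Complex.ofReal_sub,
      ← Complex.ofReal_cpow hx.1, ← Complex.ofReal_cpow (sub_nonneg.2 hx.2), ← Complex.ofReal_mul,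
      sub_sub_cancel_left]
  have key := Complex.Gamma_mul_Gamma_eq_betaIntegral (s := t) (t := ((1 - t : ℝ) : ℂ))
    (by simpa using ht₀) (by simpa using ht₁)
  rw [← Complex.ofReal_add, add_sub_cancel, Complex.ofReal_one, Complex.Gamma_one, one_mul,
    Complex.Gamma_ofReal, Complex.Gamma_ofReal, ← Complex.ofReal_mul, Real.Gamma_mul_Gamma_one_sub,
    hbeta] at key
  exact_mod_cast key.symm

theorem integral_Ioi_rpow_div_one_add {t : ℝ} (ht₀ : 0 < t) (ht₁ : t < 1) :
    ∫ u in Ioi (0 : ℝ), u ^ (t - 1) / (1 + u) = π / sin (π * t) := by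
  set φ : ℝ → ℝ := fun u => u / (1 + u)
  have hφ' : ∀ u ∈ Ioi (0 : ℝ), HasDerivWithinAt φ ((1 + u) ^ 2)⁻¹ (Ioi 0) u := by
    intro u (hu : 0 < u)
    refine (((hasDerivAt_id' u).div ((hasDerivAt_id' u).const_add 1)
      (by positivity)).hasDerivWithinAt).congr_deriv ?_
    field_simp
    ring
  have hφinj : InjOn φ (Ioi 0) := by
    intro u (hu : 0 < u) v (hv : 0 < v) h
    rw [div_eq_div_iff (by positivity) (by positivity)] at h
    linarith
  have hφimage : φ '' Ioi 0 = Ioo 0 1 := by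
    ext y
    constructor
    · rintro ⟨u, hu : 0 < u, rfl⟩
      exact ⟨by positivity, (div_lt_one (by positivity)).2 (by linarith)⟩
    · rintro ⟨hy₀, hy₁⟩
      refine ⟨y / (1 - y), div_pos hy₀ (by linarith), ?_⟩
      have : 1 - y ≠ 0 := by linarith
      simp only [φ]
      field_simp
      ring
  have key := integral_image_eq_integral_abs_deriv_smul measurableSet_Ioi hφ' hφinj
    (fun x => x ^ (t - 1) * (1 - x) ^ (-t))
  rw [hφimage, ← integral_Ioc_eq_integral_Ioo, ← intervalIntegral.integral_of_le zero_le_one,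
    integral_rpow_mul_one_sub_rpow_neg ht₀ ht₁] at key
  rw [key]
  refine setIntegral_congr_fun measurableSet_Ioi fun u (hu : 0 < u) => ?_
  have h1u : 0 < 1 + u := by positivity
  have hφu : φ u = u * (1 + u)⁻¹ := div_eq_mul_inv _ _
  have h1φu : 1 - φ u = (1 + u)⁻¹ := by
    change 1 - u / (1 + u) = _
    field_simp
    ring
  simp only [smul_eq_mul]
  rw [h1φu, hφu, mul_rpow hu.le (inv_nonneg.2 h1u.le), inv_rpow h1u.le, inv_rpow h1u.le,
    rpow_neg h1u.le, abs_of_pos (by positivity), rpow_sub_one h1u.ne', inv_inv]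
  field_simp

theorem integral_Ioi_inv_one_add_rpow {a : ℝ} (ha : 1 < a) :
    ∫ u in Ioi (0 : ℝ), (1 + u ^ a)⁻¹ = π / (a * sin (π / a)) := by
  have ha₀ : 0 < a := one_pos.trans ha
  rw [← integral_comp_rpow_Ioi_of_pos (inv_pos.2 ha₀)]
  have hcongr : EqOn (fun x : ℝ => (a⁻¹ * x ^ (a⁻¹ - 1)) • (1 + (x ^ a⁻¹) ^ a)⁻¹)
      (fun x => a⁻¹ * (x ^ (a⁻¹ - 1) / (1 + x))) (Ioi 0) := fun x (hx : 0 < x) => by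
    simp only [smul_eq_mul, rpow_inv_rpow hx.le ha₀.ne', div_eq_mul_inv, mul_assoc]
  rw [setIntegral_congr_fun measurableSet_Ioi hcongr, integral_const_mul,
    integral_Ioi_rpow_div_one_add (inv_pos.2 ha₀) (inv_lt_one_of_one_lt₀ ha), ← div_eq_mul_inv]
  field_simp

theorem sin_pi_div_pos {a : ℝ} (ha : 1 < a) : 0 < sin (π / a) :=
  sin_pos_of_pos_of_lt_pi (div_pos pi_pos (one_pos.trans ha)) (div_lt_self pi_pos ha)

theorem integrableOn_Ioi_inv_one_add_rpow {a : ℝ} (ha : 1 < a) :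
    IntegrableOn (fun u : ℝ => (1 + u ^ a)⁻¹) (Ioi 0) := by
  have hsin := sin_pi_div_pos ha
  -- the computation of the integral did not need integrability, and its value is nonzero
  refine Integrable.of_integral_ne_zero ?_
  rw [integral_Ioi_inv_one_add_rpow ha]
  positivity

theorem AntitoneOn.mul_tsum_pnat_comp_mul_mem_Icc {f : ℝ → ℝ} (hf : AntitoneOn f (Ici 0))
    (hint : IntegrableOn f (Ioi 0)) (hnonneg : ∀ x ∈ Ioi 0, 0 ≤ f x) {b : ℝ} (hb : 0 < b) :
    b * ∑' n : ℕ+, f (b * n) ∈ Icc ((∫ x in Ioi 0, f x) - b * f 0) (∫ x in Ioi 0, f x) := by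
  set g : ℝ → ℝ := fun x => f (b * x)
  have hg : AntitoneOn g (Ici 0) := fun x (hx : 0 ≤ x) y (hy : 0 ≤ y) hxy =>
    hf (mem_Ici.2 (by positivity)) (mem_Ici.2 (by positivity)) (by gcongr)
  have hgint : IntegrableOn g (Ioi 0) := by
    rw [integrableOn_Ioi_comp_mul_left_iff f 0 hb, mul_zero]
    exact hint
  have hgnonneg : ∀ x ∈ Ioi 0, 0 ≤ g x := fun x (hx : 0 < x) => hnonneg _ (mul_pos hb hx)
  have hgintegral : ∫ x in Ioi 0, g x = b⁻¹ * ∫ x in Ioi 0, f x := by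
    rw [integral_comp_mul_left_Ioi f 0 hb, mul_zero, smul_eq_mul]
  have hgsum : Summable fun n : ℕ => g n := hg.summable_of_integrableOn_Ioi_zero hgint hgnonneg
  have hupper : ∑' n : ℕ+, g n ≤ b⁻¹ * ∫ x in Ioi 0, f x := by
    rw [tsum_pnat_eq_tsum_succ (f := fun n : ℕ => g n), ← hgintegral]
    exact_mod_cast hg.tsum_add_one_le_integral hgint hgnonneg
  have hlower : b⁻¹ * ∫ x in Ioi 0, f x ≤ g (0 : ℕ) + ∑' n : ℕ+, g n := by
    rw [← hgintegral, tsum_zero_pnat_eq_tsum_nat (f := fun n : ℕ => g n) hgsum]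
    exact_mod_cast hg.integral_le_tsum hgsum hgnonneg
  simp only [g, Nat.cast_zero, mul_zero] at hupper hlower
  constructor
  · rw [inv_mul_le_iff₀ hb] at hlower
    linarith
  · rwa [le_inv_mul_iff₀ hb] at hupper

noncomputable def powerLawDof (A a v : ℝ) : ℝ :=
  ∑' ρ : ℕ+, A * ((ρ : ℕ) : ℝ) ^ (-a) / (A * ((ρ : ℕ) : ℝ) ^ (-a) + v)

section PowerLawDof

variable {A a : ℝ}

theorem summable_powerLaw (ha : 1 < a) : Summable fun ρ : ℕ+ => A * ((ρ : ℕ) : ℝ) ^ (-a) :=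
  (summable_pnat_iff_summable_nat.2 (summable_nat_rpow.2 (neg_lt_neg ha))).mul_left A

theorem summable_powerLawDof (hA : 0 < A) (ha : 1 < a) {v : ℝ} (hv : 0 < v) :
    Summable fun ρ : ℕ+ => A * ((ρ : ℕ) : ℝ) ^ (-a) / (A * ((ρ : ℕ) : ℝ) ^ (-a) + v) :=
  ((summable_powerLaw ha).div_const v).of_nonneg_of_le (fun ρ => by positivity)
    fun ρ => by gcongr; linarith [show 0 < A * ((ρ : ℕ) : ℝ) ^ (-a) by positivity]

theorem strictAntiOn_powerLawDof (hA : 0 < A) (ha : 1 < a) :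
    StrictAntiOn (powerLawDof A a) (Ioi 0) := by
  intro v (hv : 0 < v) w (hw : 0 < w) hvw
  refine (summable_powerLawDof hA ha hw).tsum_lt_tsum (i := 1) (fun ρ => ?_) ?_
    (summable_powerLawDof hA ha hv)
  · gcongr
  · gcongr

theorem continuousOn_powerLawDof (hA : 0 < A) (ha : 1 < a) {c : ℝ} (hc : 0 < c) :
    ContinuousOn (powerLawDof A a) (Ici c) := by
  refine continuousOn_tsum (fun ρ => ?_) ((summable_powerLaw (A := A) ha).div_const c)
    fun ρ v (hv : c ≤ v) => ?_
  · exact continuousOn_const.div (continuousOn_const.add continuousOn_id)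
      fun v (hv : c ≤ v) => (add_pos (by positivity) (hc.trans_le hv)).ne'
  · have hv₀ : 0 < v := hc.trans_le hv
    rw [norm_of_nonneg (by positivity)]
    gcongr
    linarith [show 0 < A * ((ρ : ℕ) : ℝ) ^ (-a) by positivity]

theorem powerLawDof_mul_rpow (hA : 0 < A) {b : ℝ} (hb : 0 < b) :
    powerLawDof A a (A * b ^ a) = ∑' ρ : ℕ+, (1 + (b * ρ) ^ a)⁻¹ := by
  refine tsum_congr fun ρ => ?_
  have hρ : (0 : ℝ) < (ρ : ℕ) := by positivity
  rw [mul_rpow hb.le hρ.le, rpow_neg hρ.le]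
  field_simp

theorem mul_powerLawDof_mul_rpow_mem_Icc (hA : 0 < A) (ha : 1 < a) {b : ℝ} (hb : 0 < b) :
    b * powerLawDof A a (A * b ^ a) ∈
      Icc (π / (a * sin (π / a)) - b) (π / (a * sin (π / a))) := by
  have ha₀ : 0 < a := one_pos.trans ha
  have hanti : AntitoneOn (fun u : ℝ => (1 + u ^ a)⁻¹) (Ici 0) :=
    fun x (hx : 0 ≤ x) y _ hxy => inv_anti₀ (by positivity) (by gcongr)
  have := hanti.mul_tsum_pnat_comp_mul_mem_Icc (integrableOn_Ioi_inv_one_add_rpow ha)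
    (fun x (hx : 0 < x) => by positivity) hb
  rwa [integral_Ioi_inv_one_add_rpow ha, zero_rpow ha₀.ne', add_zero, inv_one, mul_one,
    ← powerLawDof_mul_rpow hA hb] at this

theorem existsUnique_powerLawDof_eq (hA : 0 < A) (ha : 1 < a) {P : ℝ} (hP : 0 < P) :
    ∃! v, 0 < v ∧ powerLawDof A a v = P := by
  set I := π / (a * sin (π / a))
  have hI : 0 < I := div_pos pi_pos (mul_pos (one_pos.trans ha) (sin_pi_div_pos ha))
  set b₁ := I / (P + 1)
  set b₂ := I / P
  have hb₁ : 0 < b₁ := by positivity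
  have hb₂ : 0 < b₂ := by positivity
  have hle : P ≤ powerLawDof A a (A * b₁ ^ a) := by
    have hlower : I - b₁ ≤ b₁ * _ := (mul_powerLawDof_mul_rpow_mem_Icc hA ha hb₁).1
    rw [show I - b₁ = b₁ * P by simp only [b₁]; field_simp; ring] at hlower
    exact le_of_mul_le_mul_left hlower hb₁
  have hge : powerLawDof A a (A * b₂ ^ a) ≤ P := by
    have hupper : b₂ * _ ≤ I := (mul_powerLawDof_mul_rpow_mem_Icc hA ha hb₂).2
    rw [show I = b₂ * P by simp only [b₂]; field_simp] at hupper
    exact le_of_mul_le_mul_left hupper hb₂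
  have hv₁₂ : A * b₁ ^ a ≤ A * b₂ ^ a := by
    gcongr
    exact div_le_div_of_nonneg_left hI.le hP (by linarith)
  obtain ⟨v, hv, hvP⟩ := intermediate_value_Icc' hv₁₂
    ((continuousOn_powerLawDof hA ha (by positivity)).mono Icc_subset_Ici_self) ⟨hge, hle⟩
  have hv₀ : 0 < v := lt_of_lt_of_le (by positivity) hv.1
  exact ⟨v, ⟨hv₀, hvP⟩, fun w ⟨hw, hwP⟩ =>
    (strictAntiOn_powerLawDof hA ha).injOn hw hv₀ (hwP.trans hvP.symm)⟩

theorem tendsto_rpow_mul_of_powerLawDof_eq (hA : 0 < A) (ha : 1 < a) {ν : ℝ → ℝ}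
    (hν : ∀ᶠ P in atTop, 0 < ν P ∧ powerLawDof A a (ν P) = P) :
    Tendsto (fun P => P ^ a * ν P) atTop (𝓝 (A * (π / (a * sin (π / a))) ^ a)) := by
  have ha₀ : 0 < a := one_pos.trans ha
  set I := π / (a * sin (π / a))
  have hI : 0 < I := div_pos pi_pos (mul_pos ha₀ (sin_pi_div_pos ha))
  set b : ℝ → ℝ := fun P => (ν P / A) ^ a⁻¹
  have hνb : ∀ᶠ P in atTop, 0 < b P ∧ ν P = A * b P ^ a := hν.mono fun P ⟨hνP, _⟩ =>
    ⟨by positivity, by rw [rpow_inv_rpow (by positivity) ha₀.ne']; field_simp⟩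
  have hbounds : ∀ᶠ P in atTop, I - b P ≤ b P * P ∧ b P * P ≤ I := by
    filter_upwards [hν, hνb] with P ⟨_, hP⟩ ⟨hb, hνP⟩
    have := mul_powerLawDof_mul_rpow_mem_Icc hA ha hb
    rwa [← hνP, hP] at this
  have hb₀ : Tendsto b atTop (𝓝 0) := by
    refine tendsto_of_tendsto_of_tendsto_of_le_of_le' tendsto_const_nhds
      ((tendsto_const_nhds (x := I)).div_atTop tendsto_id) (hνb.mono fun P h => h.1.le) ?_
    filter_upwards [hbounds, eventually_gt_atTop 0] with P hP hP₀
    exact (le_div_iff₀ hP₀).2 hP.2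
  have hbP : Tendsto (fun P => b P * P) atTop (𝓝 I) := by
    refine tendsto_of_tendsto_of_tendsto_of_le_of_le' ?_ tendsto_const_nhds
      (hbounds.mono fun P h => h.1) (hbounds.mono fun P h => h.2)
    simpa using tendsto_const_nhds.sub hb₀
  refine (((continuousAt_rpow_const I a (Or.inl hI.ne')).tendsto.comp hbP).const_mul A).congr' ?_
  filter_upwards [hνb, eventually_gt_atTop 0] with P ⟨hb, hνP⟩ hP
  simp only [Function.comp, mul_rpow hb.le hP.le, hνP]
  ring

end PowerLawDof

/-- the ridgeless self-consistent equation for a power-law spectrum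
`λ_ρ = Aρ^{-a}`: for each `P ≥ 1` there is a unique `ν(P) > 0` with
`Σ_ρ λ_ρ/(λ_ρ + ν(P)) = P`, and `P^a ν(P) → C = (A^{1/a} π/(a sin(π/a)))^a > 0`. -/
theorem statement_14 (A a : ℝ) (hA : 0 < A) (ha : 1 < a) :
    (∀ P : ℝ, 1 ≤ P → ∃! v : ℝ, 0 < v ∧
      ∑' ρ : ℕ+, (A * ((ρ : ℕ) : ℝ) ^ (-a)) / (A * ((ρ : ℕ) : ℝ) ^ (-a) + v) = P) ∧
    0 < (A ^ (1 / a) * π / (a * Real.sin (π / a))) ^ a ∧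
    ∀ ν : ℝ → ℝ,
      (∀ P : ℝ, 1 ≤ P → 0 < ν P ∧
        ∑' ρ : ℕ+, (A * ((ρ : ℕ) : ℝ) ^ (-a)) / (A * ((ρ : ℕ) : ℝ) ^ (-a) + ν P) = P) →
      Tendsto (fun P : ℝ => P ^ a * ν P) atTop
        (nhds ((A ^ (1 / a) * π / (a * Real.sin (π / a))) ^ a)) := by
  have ha₀ : 0 < a := one_pos.trans ha
  have hsin := sin_pi_div_pos ha
  have hC : (A ^ (1 / a) * π / (a * sin (π / a))) ^ a = A * (π / (a * sin (π / a))) ^ a := by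
    rw [mul_div_assoc, mul_rpow (by positivity) (by positivity), ← rpow_mul hA.le,
      one_div_mul_cancel ha₀.ne', rpow_one]
  refine ⟨fun P hP => existsUnique_powerLawDof_eq hA ha (by linarith), by positivity,
    fun ν hν => ?_⟩
  rw [hC]
  exact tendsto_rpow_mul_of_powerLawDof_eq hA ha ((eventually_ge_atTop 1).mono hν)
end

section
/- Let A > 0, a > 0, b > 1 with 2a > b − 1. Then there exists a constant C > 0 such that, as the integer P → ∞, Σ_{ρ=1}^∞ ρ^{-b} · P^{-2a}/(A ρ^{-a} + P^{-a})² ∼ C P^{-(b−1)}. In particular, the contribution of the modes ρ ≤ P (for which λ_ρ = Aρ^{-a} exceeds the threshold P^{-a}) is of the same order as, and does not dominate, the tail sum Σ_{ρ>P} ρ^{-b} ∼ P^{1−b}/(b−1). -/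
/-
Multiplied by `P ^ (b - 1)`, both sums are Riemann sums `(1 / P) * ∑ ρ, g (ρ / P)` over the grid
`ℕ+ / P`: for the mode sum the profile is `g y = y ^ (-b) / (A * y ^ (-a) + 1) ^ 2` (substitute
`ρ = y P`), for the tail sum it is `y ^ (-b)` restricted to `y > 1`. Such a Riemann sum is the
integral over `(0, ∞)` of the step function `x ↦ g (⌈P x⌉ / P)`, which converges pointwise to `g`
wherever `g` is continuous; dominated convergence applies as soon as `|g|` has an antitone
integrable majorant, because `⌈P x⌉ / P ≥ x`. For the mode profile, `g y ≤ y ^ (2a - b) / A ^ 2`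
near `0` and `g y ≤ y ^ (-b)` near `∞`, and `2a - b > -1` makes the majorant integrable at `0`.
The limits are `C = ∫₀^∞ g > 0` and `∫₁^∞ y ^ (-b) dy = 1 / (b - 1)`.
-/

open Filter MeasureTheory Set Topology

section RiemannSum

variable {E : Type*} [NormedAddCommGroup E] [NormedSpace ℝ E] [CompleteSpace E]

lemma volume_real_nat_ceil_preimage {n : ℕ} (hn : n ≠ 0) :
    volume.real ((Nat.ceil : ℝ → ℕ) ⁻¹' {n}) = 1 := by
  rw [Nat.preimage_ceil_of_ne_zero hn, Real.volume_real_Ioc_of_le (by simp),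
    Nat.cast_sub (Nat.one_le_iff_ne_zero.2 hn)]
  ring

theorem integral_nat_ceil_Ioi (f : ℕ → E) (hf : IntegrableOn (fun t : ℝ => f ⌈t⌉₊) (Ioi 0)) :
    ∫ t in Ioi (0 : ℝ), f ⌈t⌉₊ = ∑' n : ℕ+, f n := by
  have hunion : ⋃ n : ℕ+, (Nat.ceil : ℝ → ℕ) ⁻¹' {(n : ℕ)} = Ioi 0 := by
    ext t
    simp only [mem_iUnion, mem_preimage, mem_singleton_iff, mem_Ioi]
    rw [← Nat.ceil_pos]
    exact ⟨fun ⟨n, hn⟩ => hn ▸ n.pos, fun h => ⟨⟨_, h⟩, rfl⟩⟩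
  rw [← hunion, integral_iUnion (fun n => Nat.measurable_ceil (measurableSet_singleton _))
    ((pairwise_disjoint_fiber _).comp_of_injective PNat.coe_injective) (hunion ▸ hf)]
  refine tsum_congr fun n => ?_
  rw [setIntegral_congr_fun (Nat.measurable_ceil (measurableSet_singleton _))
      (fun t (ht : ⌈t⌉₊ = n) => by rw [ht]), setIntegral_const,
    volume_real_nat_ceil_preimage n.ne_zero, one_smul]

theorem integral_nat_ceil_mul_Ioi (f : ℕ → E) {c : ℝ} (hc : 0 < c)
    (hf : IntegrableOn (fun x : ℝ => f ⌈c * x⌉₊) (Ioi 0)) :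
    ∫ x in Ioi (0 : ℝ), f ⌈c * x⌉₊ = c⁻¹ • ∑' n : ℕ+, f n := by
  have hf' := (integrableOn_Ioi_comp_mul_left_iff (fun t => f ⌈t⌉₊) 0 hc).1 hf
  rw [mul_zero] at hf'
  rw [integral_comp_mul_left_Ioi (fun t => f ⌈t⌉₊) 0 hc, mul_zero, integral_nat_ceil_Ioi f hf']

theorem tendsto_tsum_div_natCast_integral_Ioi {g G : ℝ → ℝ}
    (hg : ∀ᵐ x ∂(volume.restrict (Ioi 0)), ContinuousAt g x)
    (hG : IntegrableOn G (Ioi 0)) (hG_anti : AntitoneOn G (Ioi 0))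
    (hgG : ∀ y ∈ Ioi (0 : ℝ), ‖g y‖ ≤ G y) :
    Tendsto (fun P : ℕ => ∑' n : ℕ+, g (n / P) / P) atTop (𝓝 (∫ x in Ioi 0, g x)) := by
  set F : ℕ → ℝ → ℝ := fun P x => g (⌈(P : ℝ) * x⌉₊ / P)
  have hF_meas : ∀ P, AEStronglyMeasurable (F P) (volume.restrict (Ioi 0)) := fun P =>
    ((measurable_from_nat (f := fun n : ℕ => g (n / P))).comp
      (Nat.measurable_ceil.comp (measurable_const_mul _))).aestronglyMeasurable
  have hF_le : ∀ P : ℕ, 0 < P → ∀ᵐ x ∂(volume.restrict (Ioi 0)), ‖F P x‖ ≤ G x := by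
    intro P hP
    filter_upwards [ae_restrict_mem measurableSet_Ioi] with x (hx : 0 < x)
    have hxy : x ≤ ⌈(P : ℝ) * x⌉₊ / P := by
      rw [le_div_iff₀ (by positivity), mul_comm]
      exact Nat.le_ceil _
    exact (hgG _ (hx.trans_le hxy)).trans (hG_anti hx (hx.trans_le hxy) hxy)
  have hF_lim : ∀ᵐ x ∂(volume.restrict (Ioi 0)), Tendsto (F · x) atTop (𝓝 (g x)) := by
    filter_upwards [hg, ae_restrict_mem measurableSet_Ioi] with x hgx (hx : 0 < x)
    refine hgx.tendsto.comp (((tendsto_nat_ceil_mul_div_atTop hx.le).comp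
      tendsto_natCast_atTop_atTop).congr fun P => ?_)
    simp only [Function.comp_apply, mul_comm x]
  refine (tendsto_integral_filter_of_dominated_convergence G (.of_forall hF_meas)
    ((eventually_gt_atTop 0).mono hF_le) hG hF_lim).congr' ?_
  filter_upwards [eventually_gt_atTop 0] with P hP
  rw [integral_nat_ceil_mul_Ioi (fun n => g (n / P)) (Nat.cast_pos.2 hP)
    (hG.mono' (hF_meas P) (hF_le P hP)), tsum_div_const, smul_eq_mul, inv_mul_eq_div]

end RiemannSum

lemma antitoneOn_min_rpow {c b : ℝ} (hc : c ≤ 0) (hb : 0 ≤ b) :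
    AntitoneOn (fun y : ℝ => min (y ^ c) (y ^ (-b))) (Ioi 0) := fun _ hx _ _ hxy =>
  min_le_min (Real.rpow_le_rpow_of_nonpos hx hxy hc)
    (Real.rpow_le_rpow_of_nonpos hx hxy (neg_nonpos.2 hb))

lemma integrableOn_min_rpow {c b : ℝ} (hc : -1 < c) (hb : 1 < b) :
    IntegrableOn (fun y : ℝ => min (y ^ c) (y ^ (-b))) (Ioi 0) := by
  have hmeas : Measurable fun y : ℝ => min (y ^ c) (y ^ (-b)) :=
    (measurable_id.pow_const c).min (measurable_id.pow_const (-b))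
  have hnorm : ∀ y : ℝ, 0 ≤ y → ‖min (y ^ c) (y ^ (-b))‖ = min (y ^ c) (y ^ (-b)) := fun y hy =>
    Real.norm_of_nonneg (le_min (Real.rpow_nonneg hy c) (Real.rpow_nonneg hy (-b)))
  rw [← Ioc_union_Ioi_eq_Ioi zero_le_one]
  refine .union ?_ ?_
  · refine ((intervalIntegrable_iff_integrableOn_Ioc_of_le zero_le_one).1
      (intervalIntegral.intervalIntegrable_rpow' hc)).mono' hmeas.aestronglyMeasurable ?_
    filter_upwards [ae_restrict_mem measurableSet_Ioc] with y hy
    exact (hnorm y hy.1.le).trans_le (min_le_left _ _)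
  · refine (integrableOn_Ioi_rpow_of_lt (neg_lt_neg hb) one_pos).mono'
      hmeas.aestronglyMeasurable ?_
    filter_upwards [ae_restrict_mem measurableSet_Ioi] with y (hy : 1 < y)
    exact (hnorm y (zero_le_one.trans hy.le)).trans_le (min_le_right _ _)

lemma rpow_sub_one_mul_rpow_neg {b p r : ℝ} (hp : 0 < p) (hr : 0 < r) :
    p ^ (b - 1) * r ^ (-b) = (r / p) ^ (-b) / p := by
  rw [Real.div_rpow hr.le hp.le, Real.rpow_neg hp.le, Real.rpow_sub_one hp.ne']
  field_simp

noncomputable def modeProfile (A a b y : ℝ) : ℝ := y ^ (-b) / (A * y ^ (-a) + 1) ^ 2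

section ModeProfile

variable {A a b y : ℝ}

lemma modeProfile_pos (hA : 0 ≤ A) (hy : 0 < y) : 0 < modeProfile A a b y := by
  unfold modeProfile
  positivity

lemma modeProfile_le_rpow_neg (hA : 0 ≤ A) (hy : 0 < y) : modeProfile A a b y ≤ y ^ (-b) :=
  div_le_self (Real.rpow_nonneg hy.le _) (one_le_pow₀ (le_add_of_nonneg_left (by positivity)))

lemma modeProfile_le_rpow_sub (hA : 0 < A) (hy : 0 < y) :
    modeProfile A a b y ≤ y ^ (2 * a - b) / A ^ 2 := calc
  modeProfile A a b y ≤ y ^ (-b) / (A * y ^ (-a)) ^ 2 :=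
    div_le_div_of_nonneg_left (by positivity) (by positivity)
      (pow_le_pow_left₀ (by positivity) (le_add_of_nonneg_right zero_le_one) 2)
  _ = y ^ (2 * a - b) / A ^ 2 := by
    rw [mul_pow, ← Real.rpow_mul_natCast hy.le, sub_eq_neg_add, Real.rpow_add hy,
      show -a * ((2 : ℕ) : ℝ) = -(2 * a) by push_cast; ring, Real.rpow_neg hy.le (2 * a)]
    field_simp

lemma continuousAt_modeProfile (hA : 0 ≤ A) (hy : 0 < y) :
    ContinuousAt (modeProfile A a b) y := by
  have hpow : ∀ s : ℝ, ContinuousAt (fun x : ℝ => x ^ s) y := fun s =>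
    Real.continuousAt_rpow_const _ _ (.inl hy.ne')
  exact (hpow (-b)).div (((hpow (-a)).const_mul A).add continuousAt_const |>.pow 2) (by positivity)

lemma modeProfile_le_mul_min_rpow (hA : 0 < A) (ha : 0 ≤ a) (hb : 0 ≤ b) (hy : 0 < y) :
    modeProfile A a b y ≤ max 1 (A ^ 2)⁻¹ * min (y ^ min (2 * a - b) 0) (y ^ (-b)) := by
  have hK : 1 ≤ max 1 (A ^ 2)⁻¹ := le_max_left _ _
  rw [mul_min_of_nonneg _ _ (zero_le_one.trans hK)]
  refine le_min ?_ ((modeProfile_le_rpow_neg hA.le hy).trans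
    (le_mul_of_one_le_left (Real.rpow_nonneg hy.le _) hK))
  rcases le_total y 1 with hy1 | hy1
  · calc modeProfile A a b y ≤ y ^ (2 * a - b) / A ^ 2 := modeProfile_le_rpow_sub hA hy
      _ ≤ y ^ min (2 * a - b) 0 / A ^ 2 := div_le_div_of_nonneg_right
        (Real.rpow_le_rpow_of_exponent_ge hy hy1 (min_le_left _ _)) (by positivity)
      _ = (A ^ 2)⁻¹ * y ^ min (2 * a - b) 0 := div_eq_inv_mul _ _
      _ ≤ max 1 (A ^ 2)⁻¹ * y ^ min (2 * a - b) 0 := by gcongr; exact le_max_right _ _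
  · calc modeProfile A a b y ≤ y ^ (-b) := modeProfile_le_rpow_neg hA.le hy
      _ ≤ y ^ min (2 * a - b) 0 :=
        Real.rpow_le_rpow_of_exponent_le hy1 (le_min (by linarith) (by linarith))
      _ ≤ max 1 (A ^ 2)⁻¹ * y ^ min (2 * a - b) 0 :=
        le_mul_of_one_le_left (Real.rpow_nonneg hy.le _) hK

lemma rpow_sub_one_mul_div_sq_eq_modeProfile {p r : ℝ} (hp : 0 < p) (hr : 0 < r) :
    p ^ (b - 1) * (r ^ (-b) * p ^ (-(2 * a)) / (A * r ^ (-a) + p ^ (-a)) ^ 2) =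
      modeProfile A a b (r / p) / p := by
  have hden : A * r ^ (-a) + p ^ (-a) = p ^ (-a) * (A * (r / p) ^ (-a) + 1) := by
    rw [Real.div_rpow hr.le hp.le]
    field_simp
  have h2a : p ^ (-(2 * a)) = (p ^ (-a)) ^ 2 := by
    rw [← Real.rpow_mul_natCast hp.le]
    ring_nf
  calc _ = p ^ (b - 1) * r ^ (-b) / (A * (r / p) ^ (-a) + 1) ^ 2 := by
        rw [hden, h2a]
        field_simp
    _ = _ := by rw [rpow_sub_one_mul_rpow_neg hp hr, modeProfile, div_right_comm]

theorem integrableOn_modeProfile (hA : 0 < A) (hb : 1 < b) (hab : b - 1 < 2 * a) :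
    IntegrableOn (modeProfile A a b) (Ioi 0) := by
  refine ((integrableOn_min_rpow (c := min (2 * a - b) 0) (lt_min (by linarith) neg_one_lt_zero)
    hb).const_mul (max 1 (A ^ 2)⁻¹)).mono' ?_ ?_
  · exact (continuousOn_of_forall_continuousAt fun y hy =>
      continuousAt_modeProfile hA.le hy).aestronglyMeasurable measurableSet_Ioi
  · filter_upwards [ae_restrict_mem measurableSet_Ioi] with y (hy : 0 < y)
    rw [Real.norm_of_nonneg (modeProfile_pos hA.le hy).le]
    exact modeProfile_le_mul_min_rpow hA (by linarith) (by linarith) hy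

theorem integral_modeProfile_pos (hA : 0 < A) (hb : 1 < b) (hab : b - 1 < 2 * a) :
    0 < ∫ y in Ioi 0, modeProfile A a b y := by
  rw [setIntegral_pos_iff_support_of_nonneg_ae
    ((ae_restrict_iff' measurableSet_Ioi).2
      (.of_forall fun y hy => (modeProfile_pos hA.le hy).le))
    (integrableOn_modeProfile hA hb hab)]
  exact (Real.volume_Ioi ▸ ENNReal.zero_lt_top).trans_le
    (measure_mono fun y hy => ⟨(modeProfile_pos hA.le hy).ne', hy⟩)

theorem tendsto_tsum_modeProfile (hA : 0 < A) (hb : 1 < b) (hab : b - 1 < 2 * a) :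
    Tendsto (fun P : ℕ => ∑' n : ℕ+, modeProfile A a b (n / P) / P) atTop
      (𝓝 (∫ y in Ioi 0, modeProfile A a b y)) :=
  tendsto_tsum_div_natCast_integral_Ioi
    ((ae_restrict_iff' measurableSet_Ioi).2
      (.of_forall fun _ hy => continuousAt_modeProfile hA.le hy))
    ((integrableOn_min_rpow (c := min (2 * a - b) 0) (lt_min (by linarith) neg_one_lt_zero)
      hb).const_mul _)
    (fun _ hx _ hy hxy => mul_le_mul_of_nonneg_left
      (antitoneOn_min_rpow (min_le_right _ _) (zero_le_one.trans hb.le) hx hy hxy) (by positivity))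
    fun y hy => (Real.norm_of_nonneg (modeProfile_pos hA.le hy).le).trans_le
      (modeProfile_le_mul_min_rpow hA (by linarith) (by linarith) hy)

end ModeProfile

theorem rpow_sub_one_mul_tsum_rpow_neg_gt {b : ℝ} {P : ℕ} (hP : 0 < P) :
    (P : ℝ) ^ (b - 1) * ∑' ρ : {ρ : ℕ+ // P < (ρ : ℕ)}, ((ρ.val : ℕ) : ℝ) ^ (-b) =
      ∑' ρ : ℕ+, (Ioi 1).indicator (fun y : ℝ => y ^ (-b)) ((ρ : ℕ) / P) / P := by
  have hP' : (0 : ℝ) < P := Nat.cast_pos.2 hP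
  rw [← tsum_mul_left]
  refine (tsum_subtype {ρ : ℕ+ | P < (ρ : ℕ)}
    fun ρ => (P : ℝ) ^ (b - 1) * ((ρ : ℕ) : ℝ) ^ (-b)).trans (tsum_congr fun ρ => ?_)
  have hmem : P < (ρ : ℕ) ↔ ((ρ : ℕ) : ℝ) / P ∈ Ioi 1 := by
    rw [mem_Ioi, one_lt_div hP', Nat.cast_lt]
  by_cases h : P < (ρ : ℕ)
  · rw [indicator_of_mem (show ρ ∈ {ρ : ℕ+ | P < (ρ : ℕ)} from h), indicator_of_mem (hmem.1 h),
      rpow_sub_one_mul_rpow_neg hP' (Nat.cast_pos.2 ρ.pos)]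
  · rw [indicator_of_notMem (show ρ ∉ {ρ : ℕ+ | P < (ρ : ℕ)} from h),
      indicator_of_notMem (mt hmem.2 h), zero_div]

theorem tendsto_tsum_indicator_rpow_neg {b : ℝ} (hb : 1 < b) :
    Tendsto (fun P : ℕ => ∑' n : ℕ+, (Ioi 1).indicator (fun y : ℝ => y ^ (-b)) (n / P) / P)
      atTop (𝓝 (1 / (b - 1))) := by
  have hint : ∫ y in Ioi (0 : ℝ), (Ioi 1).indicator (fun y : ℝ => y ^ (-b)) y = 1 / (b - 1) := by
    rw [integral_indicator measurableSet_Ioi, Measure.restrict_restrict measurableSet_Ioi,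
      inter_eq_self_of_subset_left (Ioi_subset_Ioi zero_le_one),
      integral_Ioi_rpow_of_lt (by linarith) one_pos, Real.one_rpow,
      show -b + 1 = -(b - 1) by ring, div_neg, neg_div, neg_neg]
  have hcont : ContinuousOn (fun y : ℝ => y ^ (-b)) (interior (Ioi 1)) := by
    rw [interior_Ioi]
    exact fun y hy =>
      (Real.continuousAt_rpow_const _ _ (.inl (zero_lt_one.trans hy).ne')).continuousWithinAt
  rw [← hint]
  refine tendsto_tsum_div_natCast_integral_Ioi (G := fun y => min (y ^ (0 : ℝ)) (y ^ (-b))) ?_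
    (integrableOn_min_rpow neg_one_lt_zero hb) (antitoneOn_min_rpow le_rfl (by linarith)) ?_
  · filter_upwards [(countable_singleton (1 : ℝ)).ae_notMem _] with y hy
    exact hcont.continuousAt_indicator (by rwa [frontier_Ioi])
  · intro y (hy : 0 < y)
    by_cases h1 : 1 < y
    · rw [indicator_of_mem (show y ∈ Ioi 1 from h1), Real.norm_of_nonneg (Real.rpow_nonneg hy.le _)]
      exact le_min (Real.rpow_le_rpow_of_exponent_le h1.le (by linarith)) le_rfl
    · rw [indicator_of_notMem (show y ∉ Ioi 1 from h1), norm_zero]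
      exact le_min (Real.rpow_nonneg hy.le _) (Real.rpow_nonneg hy.le _)

theorem statement_15_general (A a b : ℝ) (hA : 0 < A) (hb : 1 < b)
    (hab : b - 1 < 2 * a) :
    (∃ C : ℝ, 0 < C ∧
      Tendsto (fun P : ℕ => (P : ℝ) ^ (b - 1) *
          ∑' ρ : ℕ+, ((ρ : ℕ) : ℝ) ^ (-b) * (P : ℝ) ^ (-(2 * a)) /
            (A * ((ρ : ℕ) : ℝ) ^ (-a) + (P : ℝ) ^ (-a)) ^ 2)
        atTop (nhds C)) ∧
    Tendsto (fun P : ℕ => (P : ℝ) ^ (b - 1) *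
        ∑' ρ : {ρ : ℕ+ // P < (ρ : ℕ)}, ((ρ.val : ℕ) : ℝ) ^ (-b))
      atTop (nhds (1 / (b - 1))) := by
  refine ⟨⟨_, integral_modeProfile_pos hA hb hab,
    (tendsto_tsum_modeProfile hA hb hab).congr' ?_⟩,
    (tendsto_tsum_indicator_rpow_neg hb).congr' ?_⟩
  · filter_upwards [eventually_gt_atTop 0] with P hP
    rw [← tsum_mul_left]
    exact tsum_congr fun ρ =>
      (rpow_sub_one_mul_div_sq_eq_modeProfile (Nat.cast_pos.2 hP) (Nat.cast_pos.2 ρ.pos)).symm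
  · filter_upwards [eventually_gt_atTop 0] with P hP
    exact (rpow_sub_one_mul_tsum_rpow_neg_gt hP).symm

/-- asymptotics of the mode-decomposed ridgeless generalisation error for
a power-law kernel spectrum `λ_ρ = Aρ^{-a}` and target coefficients `E[|c_ρ|²] = ρ^{-b}`
with `2a > b − 1`: the full mode sum scales as `C P^{-(b−1)}`, of the same order as the
tail sum `Σ_{ρ>P} ρ^{-b} ∼ P^{1−b}/(b−1)`. -/
theorem statement_15 (A a b : ℝ) (hA : 0 < A) (ha : 0 < a) (hb : 1 < b)
    (hab : b - 1 < 2 * a) :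
    (∃ C : ℝ, 0 < C ∧
      Tendsto (fun P : ℕ => (P : ℝ) ^ (b - 1) *
          ∑' ρ : ℕ+, ((ρ : ℕ) : ℝ) ^ (-b) * (P : ℝ) ^ (-(2 * a)) /
            (A * ((ρ : ℕ) : ℝ) ^ (-a) + (P : ℝ) ^ (-a)) ^ 2)
        atTop (nhds C)) ∧
    Tendsto (fun P : ℕ => (P : ℝ) ^ (b - 1) *
        ∑' ρ : {ρ : ℕ+ // P < (ρ : ℕ)}, ((ρ.val : ℕ) : ℝ) ^ (-b))
      atTop (nhds (1 / (b - 1))) :=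
  statement_15_general A a b hA hb hab
end
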